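/- Let A be the set of all real-valued sequences a = (αₙ)_{n∈ℕ} with αₙ ∈ [0,1] for all n, and let B be the set of all finitely supported real-valued sequences b = (βₙ)_{n∈ℕ} with Σₙ |βₙ| ≤ 1. Define h : A × B → ℝ by h(a,b) = Σₙ αₙβₙ, and define the semimetrics d_A(a,a') := sup_{b∈B}|h(a,b) − h(a',b)| on A and d_B(b,b') := sup_{a∈A}|h(a,b) − h(a,b')| on B. Then N_A(1/2) = 1, N_B(1) = 1, and for every ρ ∈ (0,1) the intrinsic covering number N_B(ρ) is infinite (consequently N_B^Δ(ρ) is infinite for every ρ ∈ (0,1/2)). -/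

import Mathlib

noncomputable def icov {E : Type*} (d : E → E → ℝ) (S : Set E) (ε : ℝ) : ℕ∞ :=
  sInf ((fun F : Finset E => (F.card : ℕ∞)) ''
    {F : Finset E | ↑F ⊆ S ∧ ∀ x ∈ S, ∃ y ∈ F, d x y ≤ ε})

noncomputable def dcovIn {E : Type*} (d : E → E → ℝ) (S : Set E) (ε : ℝ) : ℕ∞ :=
  sInf ((fun k : ℕ => (k : ℕ∞)) ''
    {k : ℕ | ∃ G : Fin k → Set E, (∀ i, G i ⊆ S) ∧
      (∀ i, ∀ x ∈ G i, ∀ y ∈ G i, d x y ≤ 2 * ε) ∧ S ⊆ ⋃ i, G i})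

/-!
The cube `A` lies within `d_A`-distance `1/2` of its centre `(1/2, 1/2, …)`, and since
`|h(a, b)| ≤ 1` on `A × B`, the ball `B` lies within `d_B`-distance `1` of `0`. For `ρ < 1`,
testing against `a = eₙ` shows that `eₙ` is `ρ`-close only to points `b'` with `b'ₙ ≠ 0`;
a finite set of finitely supported sequences has nonzero entries at only finitely many
indices, so it cannot be a `ρ`-net of `B`. Picking one point in each piece of a cover by
sets of diameter `2ρ` gives a `2ρ`-net, which bounds `N^Δ(ρ)` below by `N(2ρ)`.
-/

open Function

section CoveringNumbers

variable {E : Type*} {d d' : E → E → ℝ} {S : Set E} {ε : ℝ}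

theorem icov_congr (h : ∀ x ∈ S, ∀ y ∈ S, d x y = d' x y) : icov d S ε = icov d' S ε := by
  have hsets : {F : Finset E | ↑F ⊆ S ∧ ∀ x ∈ S, ∃ y ∈ F, d x y ≤ ε} =
      {F : Finset E | ↑F ⊆ S ∧ ∀ x ∈ S, ∃ y ∈ F, d' x y ≤ ε} := by
    ext F
    refine and_congr_right fun hF => forall₂_congr fun x hx => exists_congr fun y => ?_
    exact and_congr_right fun hy => by rw [h x hx y (hF hy)]
  rw [icov, icov, hsets]

theorem icov_eq_one {c : E} (hc : c ∈ S) (h : ∀ x ∈ S, d x c ≤ ε) : icov d S ε = 1 := by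
  refine le_antisymm (sInf_le ⟨{c}, ⟨by simpa using hc, fun x hx => ⟨c, by simpa using h x hx⟩⟩,
    by simp⟩) (le_sInf ?_)
  rintro _ ⟨F, ⟨-, hcover⟩, rfl⟩
  obtain ⟨y, hy, -⟩ := hcover c hc
  show (1 : ℕ∞) ≤ F.card
  exact_mod_cast Nat.succ_le_of_lt (Finset.card_pos.mpr ⟨y, hy⟩)

theorem icov_eq_top (h : ∀ F : Finset E, ↑F ⊆ S → ∃ x ∈ S, ∀ y ∈ F, ε < d x y) :
    icov d S ε = ⊤ := by
  refine sInf_eq_top.mpr ?_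
  rintro _ ⟨F, ⟨hFS, hcover⟩, rfl⟩
  obtain ⟨x, hx, hfar⟩ := h F hFS
  obtain ⟨y, hy, hxy⟩ := hcover x hx
  exact absurd hxy (hfar y hy).not_ge

theorem icov_two_mul_le_dcovIn : icov d S (2 * ε) ≤ dcovIn d S ε := by
  classical
  refine le_sInf ?_
  rintro _ ⟨k, ⟨G, hGS, hGdiam, hcover⟩, rfl⟩
  let F : Finset E := Finset.univ.image fun i : {i : Fin k // (G i).Nonempty} => i.2.some
  have hFS : ↑F ⊆ S := by
    intro y hy
    obtain ⟨i, -, rfl⟩ := Finset.mem_image.mp hy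
    exact hGS i i.2.some_mem
  have hFcover : ∀ x ∈ S, ∃ y ∈ F, d x y ≤ 2 * ε := by
    intro x hx
    obtain ⟨i, hxi⟩ := Set.mem_iUnion.mp (hcover hx)
    exact ⟨_, Finset.mem_image_of_mem _ (Finset.mem_univ ⟨i, x, hxi⟩),
      hGdiam i x hxi _ (Set.Nonempty.some_mem _)⟩
  calc icov d S (2 * ε) ≤ F.card := sInf_le ⟨F, ⟨hFS, hFcover⟩, rfl⟩
    _ ≤ k := by
      exact_mod_cast Finset.card_image_le.trans
        ((Fintype.card_subtype_le _).trans_eq (Fintype.card_fin k))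

end CoveringNumbers

theorem abs_tsum_mul_le {ι : Type*} {a b : ι → ℝ} {C : ℝ} (hC : 0 ≤ C) (ha : ∀ n, |a n| ≤ C)
    (hb : b.support.Finite) (hb1 : ∑' n, |b n| ≤ 1) : |∑' n, a n * b n| ≤ C := by
  have hsum_ab : Summable fun n => |a n * b n| :=
    summable_of_hasFiniteSupport <| hb.subset fun n hn hbn => hn (by simp [hbn])
  have hsum_b : Summable fun n => C * |b n| :=
    summable_of_hasFiniteSupport <| hb.subset fun n hn hbn => hn (by simp [hbn])
  calc |∑' n, a n * b n| ≤ ∑' n, |a n * b n| := by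
        simpa only [Real.norm_eq_abs] using norm_tsum_le_tsum_norm (f := fun n => a n * b n)
          (by simpa only [Real.norm_eq_abs] using hsum_ab)
    _ ≤ ∑' n, C * |b n| := hsum_ab.tsum_le_tsum (fun n => by
        rw [abs_mul]; exact mul_le_mul_of_nonneg_right (ha n) (abs_nonneg _)) hsum_b
    _ = C * ∑' n, |b n| := tsum_mul_left
    _ ≤ C := mul_le_of_le_one_right hC hb1

namespace CubeL1Ball

noncomputable section

def cube : Set (ℕ → ℝ) := {a | ∀ n, a n ∈ Set.Icc (0 : ℝ) 1}

def ball : Set (ℕ → ℝ) := {b | b.support.Finite ∧ ∑' n, |b n| ≤ 1}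

def pairing (a b : ℕ → ℝ) : ℝ := ∑' n, a n * b n

def distA (a a' : ℕ → ℝ) : ℝ := ⨆ b : ball, |pairing a b - pairing a' b|

def distB (b b' : ℕ → ℝ) : ℝ := ⨆ a : cube, |pairing a b - pairing a b'|

theorem const_half_mem_cube : (fun _ => (1 / 2 : ℝ)) ∈ cube :=
  fun _ => ⟨by norm_num, by norm_num⟩

theorem single_mem_cube (n : ℕ) : Pi.single n (1 : ℝ) ∈ cube := by
  intro k
  by_cases hk : k = n <;> simp [hk]

theorem zero_mem_ball : (0 : ℕ → ℝ) ∈ ball := by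
  simp [ball]

theorem single_mem_ball (n : ℕ) : Pi.single n (1 : ℝ) ∈ ball := by
  refine ⟨(Set.finite_singleton n).subset Pi.support_single_subset, ?_⟩
  rw [tsum_eq_single n fun k hk => by simp [hk]]
  simp

theorem pairing_single_left (n : ℕ) (b : ℕ → ℝ) : pairing (Pi.single n 1) b = b n := by
  rw [pairing, tsum_eq_single n fun k hk => by simp [hk]]
  simp

theorem pairing_sub_left {a a' b : ℕ → ℝ} (hb : b ∈ ball) :
    pairing a b - pairing a' b = pairing (a - a') b := by
  have hsum : ∀ c : ℕ → ℝ, Summable fun n => c n * b n := fun c =>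
    summable_of_hasFiniteSupport <| hb.1.subset (support_mul_subset_right _ _)
  simp only [pairing, Pi.sub_apply, sub_mul, (hsum a).tsum_sub (hsum a')]

theorem abs_pairing_le_one {a b : ℕ → ℝ} (ha : a ∈ cube) (hb : b ∈ ball) : |pairing a b| ≤ 1 :=
  abs_tsum_mul_le zero_le_one (fun n => abs_le.mpr ⟨by linarith [(ha n).1], (ha n).2⟩) hb.1 hb.2

theorem distA_const_half_le {a : ℕ → ℝ} (ha : a ∈ cube) : distA a (fun _ => 1 / 2) ≤ 1 / 2 := by
  refine Real.iSup_le (fun b => ?_) (by norm_num)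
  rw [pairing_sub_left b.2]
  refine abs_tsum_mul_le (by norm_num) (fun n => ?_) b.2.1 b.2.2
  rw [Pi.sub_apply, abs_le]
  constructor <;> linarith [(ha n).1, (ha n).2]

theorem distB_zero_le_one {b : ℕ → ℝ} (hb : b ∈ ball) : distB b 0 ≤ 1 := by
  refine Real.iSup_le (fun a => ?_) zero_le_one
  simpa [pairing] using abs_pairing_le_one a.2 hb

theorem abs_pairing_sub_le_distB {a b b' : ℕ → ℝ} (ha : a ∈ cube) (hb : b ∈ ball)
    (hb' : b' ∈ ball) : |pairing a b - pairing a b'| ≤ distB b b' := by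
  refine le_ciSup (f := fun a : cube => |pairing a b - pairing a b'|) ⟨2, ?_⟩ ⟨a, ha⟩
  rintro _ ⟨a, rfl⟩
  calc |pairing a b - pairing a b'| ≤ |pairing a b| + |pairing a b'| := abs_sub _ _
    _ ≤ 2 := by linarith [abs_pairing_le_one a.2 hb, abs_pairing_le_one a.2 hb']

theorem apply_ne_zero_of_distB_single_lt_one {n : ℕ} {b : ℕ → ℝ} (hb : b ∈ ball)
    (hdist : distB (Pi.single n 1) b < 1) : b n ≠ 0 := by
  intro hbn
  have := abs_pairing_sub_le_distB (single_mem_cube n) (single_mem_ball n) hb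
  rw [pairing_single_left, pairing_single_left, Pi.single_eq_same, hbn, sub_zero, abs_one] at this
  linarith

theorem icov_distB_eq_top {ρ : ℝ} (hρ : ρ < 1) : icov distB ball ρ = ⊤ := by
  refine icov_eq_top fun F hF => ?_
  have hsupp : (⋃ y ∈ F, y.support).Finite := F.finite_toSet.biUnion fun y hy => (hF hy).1
  obtain ⟨n, -, hn⟩ := (Set.infinite_univ (α := ℕ)).exists_notMem_finset hsupp.toFinset
  refine ⟨Pi.single n 1, single_mem_ball n, fun y hy => not_le.mp fun hdist => hn ?_⟩
  have hyn := apply_ne_zero_of_distB_single_lt_one (hF hy) (hdist.trans_lt hρ)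
  simpa using ⟨y, hy, hyn⟩

end

end CubeL1Ball

open CubeL1Ball in
/-- Let `A` be the set of sequences with values in `[0,1]`, and `B` the
set of finitely supported real sequences `b` with `∑ₙ |bₙ| ≤ 1`.  Let
`h(a,b) = ∑ₙ aₙbₙ`, with the associated semimetrics `d_A` on `A` and `d_B` on `B`.
Then `N_A(1/2) = 1`, `N_B(1) = 1`, `N_B(ρ) = ∞` for every `ρ ∈ (0,1)`, and consequently
`N_B^Δ(ρ) = ∞` for every `ρ ∈ (0,1/2)`. -/
theorem statement18
    (Aset : Set (ℕ → ℝ)) (hAset : Aset = {a : ℕ → ℝ | ∀ n, a n ∈ Set.Icc (0 : ℝ) 1})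
    (Bset : Set (ℕ → ℝ))
    (hBset : Bset = {b : ℕ → ℝ | (Function.support b).Finite ∧ ∑' n, |b n| ≤ 1})
    (h : (ℕ → ℝ) → (ℕ → ℝ) → ℝ) (hh : ∀ a b, h a b = ∑' n, a n * b n)
    (dA : (ℕ → ℝ) → (ℕ → ℝ) → ℝ)
    (hdA : ∀ a ∈ Aset, ∀ a' ∈ Aset, dA a a' = ⨆ b : Bset, |h a b - h a' b|)
    (dB : (ℕ → ℝ) → (ℕ → ℝ) → ℝ)
    (hdB : ∀ b ∈ Bset, ∀ b' ∈ Bset, dB b b' = ⨆ a : Aset, |h a b - h a b'|) :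
    icov dA Aset (1 / 2) = 1 ∧
    icov dB Bset 1 = 1 ∧
    (∀ ρ : ℝ, 0 < ρ → ρ < 1 → icov dB Bset ρ = ⊤) ∧
    (∀ ρ : ℝ, 0 < ρ → ρ < 1 / 2 → dcovIn dB Bset ρ = ⊤) := by
  obtain rfl : Aset = cube := hAset
  obtain rfl : Bset = ball := hBset
  obtain rfl : h = pairing := funext fun a => funext (hh a)
  have hA : icov dA cube (1 / 2) = icov distA cube (1 / 2) := icov_congr hdA
  have hB (ρ : ℝ) : icov dB ball ρ = icov distB ball ρ := icov_congr hdB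
  refine ⟨?_, ?_, fun ρ _ hρ => ?_, fun ρ _ hρ => ?_⟩
  · rw [hA]
    exact icov_eq_one const_half_mem_cube fun a ha => distA_const_half_le ha
  · rw [hB]
    exact icov_eq_one zero_mem_ball fun b hb => distB_zero_le_one hb
  · rw [hB]
    exact icov_distB_eq_top hρ
  · rw [← top_le_iff, ← icov_distB_eq_top (by linarith : 2 * ρ < 1), ← hB]
    exact icov_two_mul_le_dcovIn
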